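/- arXiv:2406.16475 — 7 statements merged into one kernel-verified Lean document; each statement's English description precedes it below -/
import Mathlib

section
/- For every i ≥ 0, the size ℓ(F_{2i+3}) of the Lyndon factorization of the Fibonacci word F_{2i+3} equals i + 2, i.e., the Lyndon factorization of F_{2i+3} consists of exactly i + 2 distinct Lyndon factors (each with exponent 1). -/
open List

variable {α : Type*} [LinearOrder α]

/-- A Lyndon word: nonempty and lexicographically strictly smaller than all of
its proper nonempty suffixes. -/
def IsLyndon (w : List α) : Prop :=
  w ≠ [] ∧ ∀ i, 0 < i → i < w.length → w < w.drop i

/-- `fs` is the Lyndon factorization of `w` (factors listed with multiplicity,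
so a necklace `f_i^{k_i}` contributes `k_i` copies of `f_i`): the factors
concatenate to `w`, each factor is Lyndon, and the sequence of factors is
lexicographically non-increasing. -/
def IsLyndonFactorization (w : List α) (fs : List (List α)) : Prop :=
  fs.flatten = w ∧ (∀ f ∈ fs, IsLyndon f) ∧ fs.Chain' (fun a b => b ≤ a)

/-- All cyclic rotations of `w` (with multiplicity). -/
def rotations (w : List α) : List (List α) :=
  (List.range w.length).map fun i => w.drop i ++ w.take i

/-- The rotation moving the last character of `w` to the front. -/
def rotR (w : List α) : List α :=
  w.drop (w.length - 1) ++ w.take (w.length - 1)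

/-- Number of maximal runs of equal consecutive characters of `s`. -/
def runCount (s : List α) : ℕ := (s.destutter (· ≠ ·)).length

/-- The Burrows–Wheeler transform: concatenation of the last characters of all
`|w|` cyclic rotations of `w`, listed in lexicographic order. -/
def BWT (w : List α) : List α :=
  (List.insertionSort (· ≤ ·) (rotations w)).flatMap fun r => r.getLast?.toList

/-- The ω-order comparison: `x ≼_ω y` iff `x^∞ ≤ y^∞`, equivalently `xy ≤ yx`. -/
def omegaLE (x y : List α) : Prop := x ++ y ≤ y ++ x

instance : DecidableRel (omegaLE (α := α)) := fun x y =>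
  inferInstanceAs (Decidable (x ++ y ≤ y ++ x))

/-- The bijective Burrows–Wheeler transform, expressed in terms of the Lyndon
factorization `fs` of a word: concatenation of the last characters of all
cyclic rotations of all Lyndon factors (with multiplicity), listed in ω-order. -/
def BBWTof (fs : List (List α)) : List α :=
  (List.insertionSort omegaLE (fs.flatMap rotations)).flatMap fun r => r.getLast?.toList

/-- The Fibonacci words over the alphabet `{a, b}` with `a ≺ b`, encoded over
`Bool` with `a = false` and `b = true`: `F_0 = b`, `F_1 = a`, `F_i = F_{i-1} F_{i-2}`. -/
def fibWord : ℕ → List Bool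
  | 0 => [true]
  | 1 => [false]
  | (n + 2) => fibWord (n + 1) ++ fibWord n


section OrderLemmas

theorem myLt_append_of_ne_nil : ∀ (u : List α) {t : List α}, t ≠ [] → u < u ++ t
  | [], t, ht => by cases t with
      | nil => exact absurd rfl ht
      | cons a t => exact Lex.nil
  | a :: u, t, ht => Lex.cons (myLt_append_of_ne_nil u ht)

theorem myLe_append (u t : List α) : u ≤ u ++ t := by
  cases t with
  | nil => simp
  | cons a t => exact le_of_lt (myLt_append_of_ne_nil u (by simp))

theorem myPrefix.le {u v : List α} (h : u <+: v) : u ≤ v := by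
  obtain ⟨t, rfl⟩ := h; exact myLe_append u t

theorem myLt_of_prefix_ne {u v : List α} (h : u <+: v) (hne : u ≠ v) : u < v := by
  obtain ⟨t, rfl⟩ := h
  rcases eq_or_ne t [] with rfl | ht
  · simp at hne
  · exact myLt_append_of_ne_nil u ht

theorem myLt_of_append_lt_append_left : ∀ (p : List α) {u v : List α}, p ++ u < p ++ v → u < v
  | [], u, v, h => h
  | a :: p, u, v, h => by
    have h' : Lex (· < ·) (a :: (p ++ u)) (a :: (p ++ v)) := h
    rw [lex_cons_iff] at h'
    exact myLt_of_append_lt_append_left p h'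

theorem myAppend_lt_append_left (p : List α) {u v : List α} (h : u < v) : p ++ u < p ++ v :=
  Lex.append_left _ h p

theorem myAppend_lt_of_lt_of_not_prefix :
    ∀ {u v : List α}, u < v → ¬ u <+: v → ∀ x y, u ++ x < v ++ y := by
  intro u
  induction u with
  | nil => intro v _ hp; exact absurd (nil_prefix) hp
  | cons a u ih =>
    intro v h hp x y
    cases v with
    | nil => exact absurd h (not_lex_nil (r := (· < ·)))
    | cons b v =>
      have h' : Lex (· < ·) (a :: u) (b :: v) := h
      cases h' with
      | rel hab => exact Lex.rel hab
      | cons h' =>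
        have hp' : ¬ u <+: v := fun hq => hp (cons_prefix_cons.mpr ⟨rfl, hq⟩)
        exact Lex.cons (ih h' hp' x y)

theorem myPrefix_of_le_of_lt_append :
    ∀ {u v x : List α}, u ≤ v → v < u ++ x → u <+: v := by
  intro u
  induction u with
  | nil => intro v x _ _; exact nil_prefix
  | cons a u ih =>
    intro v x h1 h2
    cases v with
    | nil => exact absurd (Lex.nil : ([] : List α) < a :: u) (not_lt_of_ge h1)
    | cons b v =>
      have h2' : Lex (· < ·) (b :: v) (a :: (u ++ x)) := h2
      cases h2' with
      | rel hba => exact absurd (Lex.rel hba : (b :: v) < a :: u) (not_lt_of_ge h1)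
      | cons h2' =>
        have h1' : u ≤ v := by
          by_contra hc
          exact absurd (Lex.cons (not_le.mp hc) : (a :: v) < a :: u) (not_lt_of_ge h1)
        exact cons_prefix_cons.mpr ⟨rfl, ih h1' h2'⟩

omit [LinearOrder α] in
theorem not_prefix_of_length_lt {u v : List α} (h : v.length < u.length) : ¬ u <+: v :=
  fun hp => absurd hp.length_le (by omega)

theorem IsLyndon.append {u v : List α} (hu : IsLyndon u) (hv : IsLyndon v)
    (huv : u < v) : IsLyndon (u ++ v) := by
  have hul : 0 < u.length := length_pos_iff.mpr hu.1
  have hvl : 0 < v.length := length_pos_iff.mpr hv.1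
  refine ⟨by simp [hu.1], fun i hi hilen => ?_⟩
  rw [length_append] at hilen
  rcases lt_trichotomy i u.length with h | h | h
  · rw [drop_append_of_le_length (le_of_lt h)]
    have h1 : u < u.drop i := hu.2 i hi h
    have h2 : ¬ u <+: u.drop i := not_prefix_of_length_lt (by rw [length_drop]; omega)
    exact myAppend_lt_of_lt_of_not_prefix h1 h2 v v
  · subst h
    rw [drop_left]
    by_cases hp : u <+: v
    · obtain ⟨w, rfl⟩ := hp
      have hw : w ≠ [] := by rintro rfl; rw [append_nil] at huv; exact lt_irrefl _ huv
      have := hv.2 u.length hul (by simpa using length_pos_iff.mpr hw)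
      rw [drop_left] at this
      exact myAppend_lt_append_left u this
    · have := myAppend_lt_of_lt_of_not_prefix huv hp v []
      rwa [append_nil] at this
  · have hj : i = u.length + (i - u.length) := by omega
    rw [hj, drop_length_add_append]
    set j := i - u.length with hjdef
    have hj1 : 0 < j := by omega
    have hj2 : j < v.length := by omega
    have hvj : v < v.drop j := hv.2 j hj1 hj2
    have huj : u < v.drop j := lt_trans huv hvj
    by_cases hp : u <+: v.drop j
    · obtain ⟨w', hw'⟩ := hp
      have hpv : u <+: v := myPrefix_of_le_of_lt_append (le_of_lt huv) (hw' ▸ hvj)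
      obtain ⟨v₂, rfl⟩ := hpv
      have hlen : u.length < (u ++ v₂).length := by
        have := congrArg List.length hw'
        simp [length_drop] at this ⊢
        omega
      have hv2 : u ++ v₂ < v₂ := by
        have := hv.2 u.length hul hlen
        rwa [drop_left] at this
      have h2 : v₂ < w' := by
        rw [← hw'] at hvj
        exact myLt_of_append_lt_append_left u hvj
      rw [← hw']
      exact myAppend_lt_append_left u (lt_trans hv2 h2)
    · have := myAppend_lt_of_lt_of_not_prefix huj hp v []
      rwa [append_nil] at this

/-- strict mismatch comparison -/
def Mlt (u v : List α) : Prop :=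
  ∃ (s t₁ t₂ : List α) (a b : α), a < b ∧ u = s ++ a :: t₁ ∧ v = s ++ b :: t₂

theorem Mlt.lt {u v : List α} (h : Mlt u v) : u < v := by
  obtain ⟨s, t₁, t₂, a, b, hab, rfl, rfl⟩ := h
  exact myAppend_lt_append_left s (Lex.rel hab)

theorem Mlt.append_right {u v : List α} (h : Mlt u v) (x : List α) : Mlt (u ++ x) v := by
  obtain ⟨s, t₁, t₂, a, b, hab, rfl, rfl⟩ := h
  exact ⟨s, t₁ ++ x, t₂, a, b, hab, by simp, rfl⟩

theorem Mlt.prepend {u v : List α} (h : Mlt u v) (p : List α) : Mlt (p ++ u) (p ++ v) := by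
  obtain ⟨s, t₁, t₂, a, b, hab, rfl, rfl⟩ := h
  exact ⟨p ++ s, t₁, t₂, a, b, hab, by simp, by simp⟩

theorem not_lt_of_prefix_flatten {B : List α} (hB : IsLyndon B) :
    ∀ (fs : List (List α)), (∀ u ∈ fs, IsLyndon u ∧ u < B) →
      ∀ r, r ≠ [] → r <+: fs.flatten → ¬ B < r := by
  intro fs
  induction fs with
  | nil =>
    intro _ r hr hpre
    rw [flatten_nil, prefix_nil] at hpre
    exact absurd hpre hr
  | cons u fs ih =>
    intro hall r hr hpre hBr
    rw [flatten_cons] at hpre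
    have hu := hall u (mem_cons_self)
    rcases prefix_or_prefix_of_prefix hpre (prefix_append u fs.flatten) with h | h
    · exact absurd (lt_of_le_of_lt (myPrefix.le h) hu.2) (not_lt_of_gt hBr)
    · obtain ⟨r', rfl⟩ := h
      have hpb : u <+: B := myPrefix_of_le_of_lt_append (le_of_lt hu.2) hBr
      obtain ⟨B', rfl⟩ := hpb
      have hB' : B' ≠ [] := by
        rintro rfl
        rw [append_nil] at hu
        exact lt_irrefl _ hu.2
      have hul : 0 < u.length := length_pos_iff.mpr hu.1.1
      have h1 : u ++ B' < B' := by
        have := hB.2 u.length hul (by simpa using length_pos_iff.mpr hB')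
        rwa [drop_left] at this
      have h2 : B' < r' := myLt_of_append_lt_append_left u hBr
      have h3 : u ++ B' < r' := lt_trans h1 h2
      have hr' : r' ≠ [] := by
        rintro rfl
        exact not_lex_nil (r := (· < ·)) h3
      have hpre' : r' <+: fs.flatten := by
        obtain ⟨t, ht⟩ := hpre
        rw [append_assoc] at ht
        exact ⟨t, append_cancel_left ht⟩
      exact ih (fun v hv => hall v (mem_cons_of_mem u hv)) r' hr' hpre' h3

theorem heads_eq_of_prefix {f g : List α} {fs' gs' : List (List α)}
    (hfl : IsLyndon f) (hgl : IsLyndon g)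
    (hfall : ∀ u ∈ fs', IsLyndon u) (hchain : (f :: fs').Chain' (fun a b => b ≤ a))
    (hflat : (f :: fs').flatten = (g :: gs').flatten)
    (hpre : f <+: g) : f = g := by
  by_contra hne
  obtain ⟨r, rfl⟩ := hpre
  have hr : r ≠ [] := by rintro rfl; simp at hne
  have hfl0 : 0 < f.length := length_pos_iff.mpr hfl.1
  have hglt : f ++ r < r := by
    have := hgl.2 f.length hfl0 (by simpa using length_pos_iff.mpr hr)
    rwa [drop_left] at this
  have hflat' : fs'.flatten = r ++ gs'.flatten := by
    simp only [flatten_cons, append_assoc] at hflat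
    exact append_cancel_left hflat
  have hrpre : r <+: fs'.flatten := hflat' ▸ prefix_append r gs'.flatten
  have hflt : f < f ++ r := myLt_append_of_ne_nil f hr
  haveI : IsTrans (List α) (fun a b => b ≤ a) := ⟨fun _ _ _ h h' => le_trans h' h⟩
  have hpw := (isChain_iff_pairwise).mp hchain
  have hall : ∀ u ∈ fs', IsLyndon u ∧ u < f ++ r := by
    intro u hu
    exact ⟨hfall u hu, lt_of_le_of_lt (rel_of_pairwise_cons hpw hu) hflt⟩
  exact not_lt_of_prefix_flatten hgl fs' hall r hr hrpre hglt

theorem lyndon_factorization_unique :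
    ∀ (fs gs : List (List α)), (∀ f ∈ fs, IsLyndon f) → (∀ g ∈ gs, IsLyndon g) →
      fs.Chain' (fun a b => b ≤ a) → gs.Chain' (fun a b => b ≤ a) →
      fs.flatten = gs.flatten → fs = gs := by
  intro fs
  induction fs with
  | nil =>
    intro gs _ hg _ _ hflat
    cases gs with
    | nil => rfl
    | cons g gs' =>
      exfalso
      have : g ≠ [] := (hg g (mem_cons_self)).1
      rcases g with _ | ⟨a, g⟩
      · exact this rfl
      · simp at hflat
  | cons f fs' ih =>
    intro gs hf hg hcf hcg hflat
    cases gs with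
    | nil =>
      exfalso
      have : f ≠ [] := (hf f (mem_cons_self)).1
      rcases f with _ | ⟨a, f⟩
      · exact this rfl
      · simp at hflat
    | cons g gs' =>
      have hfg : f = g := by
        have h1 : f <+: (g :: gs').flatten := hflat ▸ prefix_append f fs'.flatten
        have h2 : g <+: (g :: gs').flatten := prefix_append g gs'.flatten
        rcases prefix_or_prefix_of_prefix h1 h2 with h | h
        · exact heads_eq_of_prefix (hf f (mem_cons_self)) (hg g (mem_cons_self))
            (fun u hu => hf u (mem_cons_of_mem f hu)) hcf hflat h
        · exact (heads_eq_of_prefix (hg g (mem_cons_self)) (hf f (mem_cons_self))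
            (fun u hu => hg u (mem_cons_of_mem g hu)) hcg hflat.symm h).symm
      subst hfg
      have hflat' : fs'.flatten = gs'.flatten := by
        simp only [flatten_cons] at hflat
        exact append_cancel_left hflat
      have := ih gs' (fun u hu => hf u (mem_cons_of_mem f hu))
        (fun u hu => hg u (mem_cons_of_mem f hu)) hcf.tail hcg.tail hflat'
      rw [this]

end OrderLemmas

section FibFactors

def pr : ℕ → List Bool × List Bool
  | 0 => ([false, false, true], [false, true])
  | n + 1 => ((pr n).1 ++ ((pr n).1 ++ (pr n).2), (pr n).1 ++ (pr n).2)

def pw (n : ℕ) : List Bool := (pr n).1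
def rw' (n : ℕ) : List Bool := (pr n).2
def gw (n : ℕ) : List Bool := pw n ++ rw' n

@[simp] theorem pw_zero : pw 0 = [false, false, true] := rfl
@[simp] theorem rw'_zero : rw' 0 = [false, true] := rfl
@[simp] theorem pw_succ (n : ℕ) : pw (n + 1) = pw n ++ gw n := rfl
@[simp] theorem rw'_succ (n : ℕ) : rw' (n + 1) = gw n := rfl
theorem gw_def (n : ℕ) : gw n = pw n ++ rw' n := rfl
theorem gw_zero : gw 0 = [false, false, true, false, true] := rfl
theorem gw_succ (n : ℕ) : gw (n + 1) = pw n ++ (gw n ++ gw n) := by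
  rw [gw_def, pw_succ, rw'_succ, append_assoc]

def Gs (i : ℕ) : List Bool := ((List.range i).map gw).flatten

@[simp] theorem Gs_zero : Gs 0 = [] := rfl
theorem Gs_succ (i : ℕ) : Gs (i + 1) = Gs i ++ gw i := by
  simp [Gs, range_succ]

theorem pw_eq (i : ℕ) : pw i = [false, false, true] ++ Gs i := by
  induction i with
  | zero => simp
  | succ n ih => rw [pw_succ, Gs_succ, ih, append_assoc]

theorem fibWord_add_two (n : ℕ) : fibWord (n + 2) = fibWord (n + 1) ++ fibWord n := rfl

theorem fib_ae (i : ℕ) :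
    fibWord (2 * i + 3) = [false, true] ++ Gs i ++ [false] ∧
    [false] ++ fibWord (2 * i + 2) ++ ([false, true] ++ Gs i) = gw i := by
  induction i with
  | zero =>
    constructor
    · show fibWord 3 = _
      rfl
    · show [false] ++ fibWord 2 ++ _ = _
      rfl
  | succ n ih =>
    obtain ⟨hA, hE⟩ := ih
    have e1 : 2 * (n + 1) + 3 = (2 * n + 3) + 2 := by ring
    have e2 : 2 * (n + 1) + 2 = (2 * n + 2) + 2 := by ring
    have e3 : (2 * n + 3) + 1 = (2 * n + 2) + 2 := by ring
    have hF1 : fibWord (2 * (n + 1) + 3) =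
        fibWord (2 * n + 3) ++ fibWord (2 * n + 2) ++ fibWord (2 * n + 3) := by
      rw [e1, fibWord_add_two, e3, fibWord_add_two]
    have hF2 : fibWord (2 * (n + 1) + 2) = fibWord (2 * n + 3) ++ fibWord (2 * n + 2) := by
      rw [e2, fibWord_add_two]
    constructor
    · rw [hF1, hA, Gs_succ, ← hE]
      simp [append_assoc]
    · rw [hF2, hA, Gs_succ, gw_succ, ← hE, pw_eq]
      simp [append_assoc]

theorem fib_flatten (i : ℕ) : fibWord (2 * i + 3) = [false, true] ++ Gs i ++ [false] :=
  (fib_ae i).1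

theorem pw_ne_nil (n : ℕ) : pw n ≠ [] := by
  induction n with
  | zero => simp
  | succ n ih => simp [pw_succ, ih]

theorem rw'_ne_nil (n : ℕ) : rw' n ≠ [] := by
  cases n with
  | zero => simp
  | succ n => simp [rw'_succ, gw_def, pw_ne_nil]

theorem gw_ne_nil (n : ℕ) : gw n ≠ [] := by
  simp [gw_def, pw_ne_nil]

theorem mlt_gw : ∀ n, Mlt (gw n) (rw' n)
  | 0 => ⟨[false], [true, false, true], [], false, true, by decide, rfl, rfl⟩
  | n + 1 => by
    rw [gw_succ, rw'_succ, gw_def n]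
    exact ((mlt_gw n).append_right (gw n)).prepend (pw n)

theorem pw_lt_gw (n : ℕ) : pw n < gw n :=
  myLt_append_of_ne_nil (pw n) (rw'_ne_nil n)

theorem lyndon_pw_gw : ∀ n, IsLyndon (pw n) ∧ IsLyndon (gw n)
  | 0 => by
    constructor
    · refine ⟨by simp, fun i h1 h2 => ?_⟩
      have h2' : i < 3 := by simpa using h2
      interval_cases i <;> decide
    · refine ⟨by simp [gw_def, pw_ne_nil], fun i h1 h2 => ?_⟩
      rw [show gw 0 = [false, false, true, false, true] from rfl] at h2 ⊢
      have h2' : i < 5 := by simpa using h2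
      interval_cases i <;> decide
  | n + 1 => by
    obtain ⟨hp, hg⟩ := lyndon_pw_gw n
    have hp1 : IsLyndon (pw (n + 1)) := by
      rw [pw_succ]
      exact hp.append hg (pw_lt_gw n)
    refine ⟨hp1, ?_⟩
    have hlt : pw (n + 1) < gw n := by
      have : Mlt (pw n ++ gw n) (pw n ++ rw' n) := (mlt_gw n).prepend (pw n)
      rw [← gw_def, ← pw_succ] at this
      exact this.lt
    have := hp1.append hg hlt
    rwa [pw_succ, append_assoc, ← gw_succ] at this

theorem lyndon_gw (n : ℕ) : IsLyndon (gw n) := (lyndon_pw_gw n).2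

theorem gw_anti : StrictAnti gw := by
  apply strictAnti_nat_of_succ_lt
  intro n
  have := (mlt_gw (n + 1)).lt
  rwa [rw'_succ] at this

theorem gw_lt_ab (n : ℕ) : gw n < [false, true] := by
  have h0 : gw 0 < [false, true] := by
    have := (mlt_gw 0).lt
    rwa [rw'_zero] at this
  exact lt_of_le_of_lt (gw_anti.antitone (Nat.zero_le n)) h0

theorem false_prefix_gw (n : ℕ) : [false] <+: gw n := by
  have h0 : [false] <+: pw n := by
    induction n with
    | zero => exact ⟨[false, true], rfl⟩
    | succ n ih => exact ih.trans (prefix_append _ _)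
  exact h0.trans (prefix_append _ _)

theorem gw_len_lt (n : ℕ) : (gw n).length < (gw (n + 1)).length := by
  rw [gw_succ]
  have := length_pos_iff.mpr (pw_ne_nil n)
  have := length_pos_iff.mpr (gw_ne_nil n)
  simp only [length_append]
  omega

theorem gw_len_mono : StrictMono (fun n => (gw n).length) :=
  strictMono_nat_of_lt_succ gw_len_lt

theorem gw_len_ge (n : ℕ) : 5 ≤ (gw n).length := by
  have h0 : (gw 0).length = 5 := rfl
  have := gw_len_mono.monotone (Nat.zero_le n)
  omega

/-- the canonical Lyndon factorization of `fibWord (2i+3)` -/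
def fs0 (i : ℕ) : List (List Bool) :=
  [false, true] :: ((List.range i).map gw ++ [[false]])

theorem fs0_length (i : ℕ) : (fs0 i).length = i + 2 := by
  simp [fs0]

theorem lyndon_ab : IsLyndon [false, true] := by
  refine ⟨by simp, fun i h1 h2 => ?_⟩
  simp only [length] at h2
  interval_cases i <;> decide

theorem lyndon_a : IsLyndon [false] := by
  refine ⟨by simp, fun i h1 h2 => ?_⟩
  simp only [length] at h2
  omega

theorem fs0_isFactorization (i : ℕ) :
    IsLyndonFactorization (fibWord (2 * i + 3)) (fs0 i) := by
  refine ⟨?_, ?_, ?_⟩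
  · rw [fib_flatten]
    simp [fs0, Gs, append_assoc]
  · intro f hf
    rcases mem_cons.mp hf with rfl | hf
    · exact lyndon_ab
    · rcases mem_append.mp hf with hf | hf
      · obtain ⟨k, _, rfl⟩ := mem_map.mp hf
        exact lyndon_gw k
      · rw [mem_singleton.mp hf]
        exact lyndon_a
  · apply Pairwise.isChain
    rw [fs0, pairwise_cons]
    constructor
    · intro x hx
      rcases mem_append.mp hx with hx | hx
      · obtain ⟨k, _, rfl⟩ := mem_map.mp hx
        exact le_of_lt (gw_lt_ab k)
      · rw [mem_singleton.mp hx]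
        exact myPrefix.le ⟨[true], rfl⟩
    · rw [pairwise_append]
      refine ⟨?_, ?_, ?_⟩
      · refine (List.pairwise_lt_range (n := i)).map gw (fun a b hab => ?_)
        exact le_of_lt (gw_anti hab)
      · simp
      · intro x hx y hy
        rw [mem_singleton.mp hy]
        obtain ⟨k, _, rfl⟩ := mem_map.mp hx
        exact myPrefix.le (false_prefix_gw k)

theorem fs0_nodup (i : ℕ) : (fs0 i).Nodup := by
  rw [fs0, nodup_cons]
  constructor
  · intro hmem
    rcases mem_append.mp hmem with hx | hx
    · obtain ⟨k, _, heq⟩ := mem_map.mp hx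
      have := congrArg List.length heq
      have := gw_len_ge k
      simp at *
      omega
    · simp at hx
  · rw [nodup_append]
    refine ⟨?_, by simp, ?_⟩
    · have hne : List.Pairwise (fun a b : List Bool => a ≠ b) ((List.range i).map gw) :=
        List.Pairwise.map gw
          (fun a b hab heq => absurd (congrArg List.length heq) (ne_of_lt (gw_len_mono hab)))
          (List.pairwise_lt_range (n := i))
      exact hne
    · intro x hx y hy hxy
      subst hxy
      rw [mem_singleton.mp hy] at hx
      obtain ⟨k, _, heq⟩ := mem_map.mp hx
      have := congrArg List.length heq
      have := gw_len_ge k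
      simp at *
      omega

end FibFactors

/-- main -/
theorem fibWord_lyndonFactorization_size (i : ℕ) (fs : List (List Bool))
    (hfs : IsLyndonFactorization (fibWord (2 * i + 3)) fs) :
    fs.length = i + 2 ∧ fs.Nodup := by
  obtain ⟨h1, h2, h3⟩ := hfs
  obtain ⟨g1, g2, g3⟩ := fs0_isFactorization i
  have heq : fs = fs0 i :=
    lyndon_factorization_unique fs (fs0 i) h2 g2 h3 g3 (by rw [h1, g1])
  rw [heq]
  exact ⟨fs0_length i, fs0_nodup i⟩
end

section
/- Let w be a Lyndon word, let u be a nonempty proper suffix of w, and let v be a nonempty prefix of w. Then the concatenation uv is not a Lyndon word. -/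
open List

variable {α : Type*} [LinearOrder α]

/-- If `w` is a Lyndon word, `u` a nonempty proper suffix of `w`, and `v` a
nonempty prefix of `w`, then `uv` is not a Lyndon word. -/
theorem suffix_prefix_concat_not_lyndon (w u v : List α) (hw : IsLyndon w)
    (hu : u <:+ w) (hune : u ≠ []) (huprop : u ≠ w)
    (hv : v <+: w) (hvne : v ≠ []) :
    ¬ IsLyndon (u ++ v) := by
  intro hl
  -- prefix implies ≤
  have hle_app : ∀ (x y : List α), x ≤ x ++ y := by
    intro x y
    cases y with
    | nil => simp
    | cons a t =>
      apply le_of_lt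
      show List.Lex (· < ·) x (x ++ a :: t)
      induction x with
      | nil => exact List.Lex.nil
      | cons b x ih => exact List.Lex.cons ih
  -- v ≤ w
  obtain ⟨r, hr⟩ := hv
  have hvw : v ≤ w := hr ▸ hle_app v r
  -- w < u
  obtain ⟨t, ht⟩ := hu
  have htne : t ≠ [] := by
    rintro rfl; exact huprop (by simpa using ht)
  have hlen : 0 < t.length := List.length_pos_iff.mpr htne
  have hlen2 : t.length < w.length := by
    rw [← ht, List.length_append]
    have : 0 < u.length := List.length_pos_iff.mpr hune
    omega
  have hwu : w < u := by
    have := hw.2 t.length hlen hlen2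
    rw [← ht] at this ⊢; rwa [List.drop_left] at this
  -- uv < v
  have huvv : u ++ v < v := by
    have hlen3 : u.length < (u ++ v).length := by
      rw [List.length_append]
      have : 0 < v.length := List.length_pos_iff.mpr hvne
      omega
    have hlen4 : 0 < u.length := List.length_pos_iff.mpr hune
    have := hl.2 u.length hlen4 hlen3
    rwa [List.drop_left] at this
  -- u ≤ uv
  have huuv : u ≤ u ++ v := hle_app u v
  exact absurd (huuv.trans_lt (huvv.trans_le (hvw.trans hwu.le))) (lt_irrefl u)
end

section
/- For every primitive string w of length n, the minimum of r_B over all cyclic rotations of w is at most r(w), i.e., min_{0 ≤ i < n} r_B(rot^i(w)) ≤ r(w). -/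
open List

variable {α : Type*} [LinearOrder α]

/-- A string is primitive if it is not a power `u^k` with `k ≥ 2`. -/
def Primitive (w : List α) : Prop :=
  ¬ ∃ (u : List α) (k : ℕ), 2 ≤ k ∧ w = (List.replicate k u).flatten

set_option linter.unusedSectionVars false

lemma lex_lt_iff {x y : List α} : x < y ↔ List.Lex (· < ·) x y := Iff.rfl

lemma le_append_self (x t : List α) : x ≤ x ++ t := by
  induction x with
  | nil => cases t; exact le_rfl; exact (List.nil_lt_cons _ _).le
  | cons a x ih => exact List.cons_le_cons a ih

lemma lt_append_self (x : List α) {t : List α} (ht : t ≠ []) : x < x ++ t := by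
  induction x with
  | nil => obtain ⟨c, t', rfl⟩ := List.exists_cons_of_ne_nil ht; exact List.nil_lt_cons _ _
  | cons a x ih => exact lex_lt_iff.mpr (List.Lex.cons (lex_lt_iff.mp ih))

lemma lex_decomp {x y : List α} (h : List.Lex (· < ·) x y) :
    (∃ t, t ≠ [] ∧ y = x ++ t) ∨
      ∃ p a b s t, a < b ∧ x = p ++ a :: s ∧ y = p ++ b :: t := by
  induction h with
  | @nil a l => exact Or.inl ⟨a :: l, by simp, by simp⟩
  | @cons a l₁ l₂ h ih =>
      rcases ih with ⟨t, ht, rfl⟩ | ⟨p, u, v, s, t, huv, rfl, rfl⟩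
      · exact Or.inl ⟨t, ht, by simp⟩
      · exact Or.inr ⟨a :: p, u, v, s, t, huv, by simp, by simp⟩
  | @rel a l₁ b l₂ h => exact Or.inr ⟨[], a, b, l₁, l₂, h, by simp, by simp⟩

lemma mid_lt_mid {p s t : List α} {a b : α} (hab : a < b) :
    p ++ a :: s < p ++ b :: t :=
  lex_lt_iff.mpr (List.Lex.append_left _ (List.Lex.rel hab) p)

lemma append_lt_append_of_lt {x y : List α} (h : x < y) (hlen : x.length = y.length)
    (z w : List α) : x ++ z < y ++ w := by
  rcases lex_decomp (lex_lt_iff.mp h) with ⟨t, ht, rfl⟩ | ⟨p, a, b, s, t, hab, rfl, rfl⟩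
  · exfalso
    rw [List.length_append] at hlen
    exact ht (List.length_eq_zero_iff.mp (by omega))
  · simpa using mid_lt_mid (p := p) (s := s ++ z) (t := t ++ w) hab

lemma append_left_lt_iff (y : List α) {x z : List α} : y ++ x < y ++ z ↔ x < z := by
  induction y with
  | nil => rfl
  | cons a y ih =>
    show List.Lex (· < ·) (a :: (y ++ x)) (a :: (y ++ z)) ↔ _
    rw [List.cons_lex_cons_iff]; simp only [lt_irrefl, false_or, true_and]; exact ih

lemma append_left_le_iff (y : List α) {x z : List α} : y ++ x ≤ y ++ z ↔ x ≤ z := by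
  rw [← not_lt, ← not_lt, append_left_lt_iff]

lemma append_le_append_iff_of_len {x y : List α} (hlen : x.length = y.length) (z : List α) :
    x ++ z ≤ y ++ z ↔ x ≤ y := by
  constructor
  · intro h
    by_contra hc
    exact absurd h (not_le.mpr (append_lt_append_of_lt (not_le.mp hc) hlen.symm z z))
  · intro h
    rcases h.lt_or_eq with h | rfl
    · exact (append_lt_append_of_lt h hlen z z).le
    · exact le_rfl

lemma omegaLE_iff_le_of_len {x y : List α} (hlen : x.length = y.length) :
    (x ++ y ≤ y ++ x) ↔ x ≤ y := by
  constructor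
  · intro h
    by_contra hc
    exact absurd h (not_le.mpr (append_lt_append_of_lt (not_le.mp hc) hlen.symm x y))
  · intro h
    rcases h.lt_or_eq with h | rfl
    · exact (append_lt_append_of_lt h hlen y x).le
    · exact le_rfl


lemma repFl_succ' (t : List α) (k : ℕ) :
    (List.replicate (k+1) t).flatten = t ++ (List.replicate k t).flatten := by
  simp [List.replicate_succ]

lemma repFl_add (t : List α) (a b : ℕ) :
    (List.replicate (a+b) t).flatten
      = (List.replicate a t).flatten ++ (List.replicate b t).flatten := by
  rw [List.replicate_add, List.flatten_append]

lemma comm_repFl : ∀ N (x y : List α), x.length + y.length ≤ N → x ++ y = y ++ x →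
    ∃ (v : List α) (a b : ℕ),
      x = (List.replicate a v).flatten ∧ y = (List.replicate b v).flatten := by
  intro N
  induction N with
  | zero =>
      intro x y hN h
      have hx : x = [] := List.length_eq_zero_iff.mp (by omega)
      have hy : y = [] := List.length_eq_zero_iff.mp (by omega)
      exact ⟨[], 0, 0, by simp [hx], by simp [hy]⟩
  | succ N ih =>
      intro x y hN h
      rcases eq_or_ne x [] with rfl | hx
      · exact ⟨y, 0, 1, by simp, by simp⟩
      rcases eq_or_ne y [] with rfl | hy
      · exact ⟨x, 1, 0, by simp, by simp⟩
      have hx1 := List.length_pos_of_ne_nil hx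
      have hy1 := List.length_pos_of_ne_nil hy
      rcases le_or_gt x.length y.length with hle | hlt
      · -- x is a prefix of y
        have hxpref : x = y.take x.length := by
          have := congrArg (fun l => List.take x.length l) h
          simpa [List.take_append, Nat.sub_eq_zero_of_le hle,
            List.take_of_length_le (le_refl x.length)] using this
        set y' := y.drop x.length with hy'
        have hyx : y = x ++ y' := by
          conv_lhs => rw [← List.take_append_drop x.length y]
          rw [← hxpref]
        have hcomm : x ++ y' = y' ++ x := by
          have : x ++ (x ++ y') = (x ++ y') ++ x := by rw [← hyx, h]
          rw [List.append_assoc] at this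
          exact List.append_cancel_left this
        have hxlen : 0 < x.length := List.length_pos_of_ne_nil hx
        have hlen : x.length + y'.length ≤ N := by
          have : y'.length = y.length - x.length := by simp [hy']
          omega
        obtain ⟨v, a, b, hva, hvb⟩ := ih x y' hlen hcomm
        exact ⟨v, a, a + b, hva, by rw [hyx, hva, hvb, ← repFl_add]⟩
      · -- y is a prefix of x
        have hle : y.length ≤ x.length := hlt.le
        have hypref : y = x.take y.length := by
          have := congrArg (fun l => List.take y.length l) h.symm
          simpa [List.take_append, Nat.sub_eq_zero_of_le hle,
            List.take_of_length_le (le_refl y.length)] using this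
        set x' := x.drop y.length with hx'
        have hxy : x = y ++ x' := by
          conv_lhs => rw [← List.take_append_drop y.length x]
          rw [← hypref]
        have hcomm : y ++ x' = x' ++ y := by
          have : y ++ (y ++ x') = (y ++ x') ++ y := by rw [← hxy, h.symm]
          rw [List.append_assoc] at this
          exact List.append_cancel_left this
        have hlen : y.length + x'.length ≤ N := by
          have : x'.length = x.length - y.length := by simp [hx']
          omega
        obtain ⟨v, a, b, hva, hvb⟩ := ih y x' hlen hcomm
        exact ⟨v, a + b, a, by rw [hxy, hva, hvb, ← repFl_add], hva⟩

lemma repFl_comm (t : List α) (a : ℕ) :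
    (List.replicate a t).flatten ++ t = t ++ (List.replicate a t).flatten := by
  induction a with
  | zero => simp
  | succ a ih => rw [repFl_succ', List.append_assoc, ih]

lemma rotate_repFl_mul (t : List α) (k q : ℕ) :
    ((List.replicate k t).flatten).rotate (t.length * q) = (List.replicate k t).flatten := by
  induction q with
  | zero => simp
  | succ q ih =>
      rw [Nat.mul_succ, ← List.rotate_rotate, ih]
      cases k with
      | zero => simp
      | succ k =>
          rw [repFl_succ', List.rotate_append_length_eq, ← repFl_comm]

lemma repFl_rot_aux (a d : List α) (k : ℕ) :
    d ++ (List.replicate k (a ++ d)).flatten ++ a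
      = (List.replicate (k+1) (d ++ a)).flatten := by
  induction k with
  | zero => simp
  | succ k ih =>
      rw [repFl_succ']
      calc d ++ ((a ++ d) ++ (List.replicate k (a ++ d)).flatten) ++ a
          = (d ++ a) ++ (d ++ (List.replicate k (a ++ d)).flatten ++ a) := by
            simp [List.append_assoc]
        _ = (d ++ a) ++ (List.replicate (k+1) (d ++ a)).flatten := by rw [ih]
        _ = _ := by rw [← repFl_succ']

lemma rotate_repFl (t : List α) (k j : ℕ) :
    ∃ t', t'.length = t.length ∧
      ((List.replicate k t).flatten).rotate j = (List.replicate k t').flatten := by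
  rcases eq_or_ne t [] with rfl | ht
  · exact ⟨[], rfl, by simp⟩
  cases k with
  | zero => exact ⟨t, rfl, by simp⟩
  | succ k =>
      have hm : 0 < t.length := List.length_pos_of_ne_nil ht
      refine ⟨t.rotate (j % t.length), by simp, ?_⟩
      set r := j % t.length with hr
      have hrm : r < t.length := Nat.mod_lt _ hm
      have h1 : j = t.length * (j / t.length) + r := by
        exact (Nat.div_add_mod j t.length).symm
      rw [h1, ← List.rotate_rotate, rotate_repFl_mul]
      have h2 : (List.replicate (k+1) t).flatten.rotate r
          = t.drop r ++ (List.replicate k t).flatten ++ t.take r := by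
        rw [repFl_succ', List.rotate_eq_drop_append_take (hrm.le.trans (by simp))]
        simp [List.drop_append_of_le_length hrm.le, List.take_append_of_le_length hrm.le,
          List.append_assoc]
      rw [h2, List.rotate_eq_drop_append_take hrm.le]
      have := repFl_rot_aux (t.take r) (t.drop r) k
      rw [List.take_append_drop] at this
      exact this


lemma primitive_rotate {w : List α} (hw : Primitive w) (j : ℕ) : Primitive (w.rotate j) := by
  rintro ⟨v, k, hk, hv⟩
  have h2 : w = (w.rotate j).rotate (w.length - j % w.length) := by
    have := (List.rotate_eq_iff (l := w) (l' := w.rotate j) (n := j)).mp rfl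
    simpa using this
  obtain ⟨v', hlen, hrot⟩ := rotate_repFl v k (w.length - j % w.length)
  exact hw ⟨v', k, hk, by rw [h2, hv, hrot]⟩

lemma exists_lyndon_rotation (w : List α) (hw : Primitive w) (hne : w ≠ []) :
    ∃ j < w.length, IsLyndon (w.rotate j) := by
  have hn : 0 < w.length := List.length_pos_of_ne_nil hne
  obtain ⟨j, hj, hmin⟩ := Finset.exists_min_image (Finset.range w.length)
    (fun i => w.rotate i) ⟨0, by simpa using hn⟩
  rw [Finset.mem_range] at hj
  refine ⟨j, hj, ?_⟩
  set u := w.rotate j with hu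
  have hulen : u.length = w.length := List.length_rotate w j
  have humin : ∀ k, u ≤ u.rotate k := by
    intro k
    have h1 : u.rotate k = w.rotate ((j + k) % w.length) := by
      rw [hu, List.rotate_rotate, List.rotate_mod]
    rw [h1]
    exact hmin _ (Finset.mem_range.mpr (Nat.mod_lt _ hn))
  have hune : u ≠ [] := by simp [hu, List.rotate_eq_nil_iff]; exact hne
  refine ⟨hune, ?_⟩
  intro i hi0 hiu
  by_contra hcon
  push_neg at hcon
  -- hcon : u.drop i ≤ u
  set x := u.take i with hx
  set y := u.drop i with hyy
  have hxy : x ++ y = u := List.take_append_drop i u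
  have hxlen : x.length = i := by rw [hx, List.length_take]; omega
  have hylen : y.length = u.length - i := by rw [hyy, List.length_drop]
  have hxne : x ≠ [] := by intro h; rw [h] at hxlen; simp at hxlen; omega
  have hrot_i : u.rotate i = y ++ x := by
    rw [List.rotate_eq_drop_append_take hiu.le]
  rcases hcon.lt_or_eq with hlt | heq
  · rcases lex_decomp hlt with ⟨t, ht, hyt⟩ | ⟨p, a, b, s, t, hab, hyp, hup⟩
    · -- y is a proper prefix of u : u = y ++ t
      have hut : u = y ++ t := hyt
      have htlen : t.length = i := by
        have := congrArg List.length hut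
        simp [hylen] at this; omega
      -- rotation by y.length : u ≤ t ++ y
      have h1 : u ≤ t ++ y := by
        have := humin y.length
        rwa [List.rotate_eq_drop_append_take (by omega), hut,
          List.drop_append_of_le_length (le_refl y.length),
          List.take_append_of_le_length (le_refl y.length),
          List.drop_length, List.take_length, List.nil_append, ← hut] at this
      -- so x ++ y ≤ t ++ y hence x ≤ t
      have hxt : x ≤ t := by
        rw [← hxy] at h1
        exact (append_le_append_iff_of_len (by omega) y).mp h1
      -- rotation by i : u ≤ y ++ x, and u = y ++ t, so t ≤ x
      have htx : t ≤ x := by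
        have := humin i
        rw [hrot_i, hut] at this
        exact (append_left_le_iff y).mp this
      have hxteq : x = t := le_antisymm hxt htx
      -- u = x ++ y = y ++ x : commuting words
      have hcomm : x ++ y = y ++ x := by rw [hxy, hut, hxteq]
      obtain ⟨v, a, b, hva, hvb⟩ :=
        comm_repFl (x.length + y.length) x y le_rfl hcomm
      have ha : 1 ≤ a := by
        rcases Nat.eq_zero_or_pos a with rfl | h; · simp at hva; exact absurd hva hxne
        exact h
      have hb : 1 ≤ b := by
        rcases Nat.eq_zero_or_pos b with rfl | h
        · rw [hvb] at hylen; simp at hylen; omega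
        exact h
      have : u = (List.replicate (a + b) v).flatten := by
        rw [← hxy, hva, hvb, List.replicate_add, List.flatten_append]
      exact primitive_rotate hw j ⟨v, a + b, by omega, this⟩
    · -- strict descent inside y : contradiction with minimality at rotation i
      have h1 : y ++ x < u := by
        rw [hyp, hup]
        simpa [List.append_assoc] using mid_lt_mid (p := p) (s := s ++ x) (t := t) hab
      have h2 := humin i
      rw [hrot_i] at h2
      exact absurd h1 (not_lt.mpr h2)
  · -- y = u : impossible since x nonempty
    have := congrArg List.length heq
    rw [hylen] at this
    omega


-- factorization of a Lyndon word is the single factor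
lemma lyndon_fact_eq {u : List α} (hu : IsLyndon u) {fs : List (List α)}
    (hfs : IsLyndonFactorization u fs) : fs = [u] := by
  obtain ⟨hflat, hlyn, hchain⟩ := hfs
  match fs, hflat with
  | [], hflat => exact absurd hflat.symm hu.1
  | [f], hflat => rw [← hflat]; simp
  | f :: g :: rest, hflat =>
    exfalso
    have hne : f :: g :: rest ≠ ([] : List (List α)) := by simp
    set L := (g :: rest).getLast (List.cons_ne_nil g rest) with hL
    have hLmem : L ∈ g :: rest := List.getLast_mem _
    have hLlyn : IsLyndon L := hlyn L (by simp [List.mem_cons.mp hLmem])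
    have hflyn : IsLyndon f := hlyn f (by simp)
    have hpair : (f :: g :: rest).Pairwise (fun a b => b ≤ a) := by
      rw [← List.isChain_iff_pairwise]; exact hchain
    have hLf : L ≤ f := (List.pairwise_cons.mp hpair).1 L hLmem
    have hgetLast : (f :: g :: rest).getLast hne = L := by
      rw [List.getLast_cons (List.cons_ne_nil g rest)]
    have hsplit : (f :: g :: rest).dropLast ++ [L] = f :: g :: rest := by
      rw [← hgetLast]; exact List.dropLast_append_getLast hne
    set P := (f :: g :: rest).dropLast.flatten with hP
    have hPu : P ++ L = u := by
      rw [← hflat]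
      conv_rhs => rw [← hsplit]
      rw [List.flatten_append, hP]
      simp
    have hPne : P ≠ [] := by
      have hdl : (f :: g :: rest).dropLast = f :: (g :: rest).dropLast := by simp
      rw [hP, hdl]
      simp only [List.flatten_cons]
      intro h
      exact hflyn.1 (by simpa using (List.append_eq_nil_iff.mp h).1)
    have hPlen : 0 < P.length := List.length_pos_of_ne_nil hPne
    have hLlen : 0 < L.length := List.length_pos_of_ne_nil hLlyn.1
    have hulen : u.length = P.length + L.length := by rw [← hPu]; simp
    have hdropL : u.drop P.length = L := by
      rw [← hPu, List.drop_append_of_le_length (le_refl _), List.drop_length,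
        List.nil_append]
    have huL : u < L := by
      have := hu.2 P.length hPlen (by omega)
      rwa [hdropL] at this
    have hfu : f ≤ u := by
      rw [← hflat]
      simpa using le_append_self f (g :: rest).flatten
    exact absurd (lt_of_lt_of_le huL (hLf.trans hfu)) (lt_irrefl u)

-- insertionSort congruence
lemma orderedInsert_congr (r s : List α → List α → Prop) [DecidableRel r] [DecidableRel s]
    (a : List α) (m : List (List α)) (h : ∀ b ∈ m, (r a b ↔ s a b)) :
    List.orderedInsert r a m = List.orderedInsert s a m := by
  induction m with
  | nil => rfl
  | cons b m ih =>
      simp only [List.orderedInsert]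
      by_cases hr : r a b
      · rw [if_pos hr, if_pos ((h b (by simp)).mp hr)]
      · rw [if_neg hr, if_neg (fun hs => hr ((h b (by simp)).mpr hs)),
          ih (fun c hc => h c (by simp [hc]))]

lemma insertionSort_congr (r s : List α → List α → Prop) [DecidableRel r] [DecidableRel s]
    (l : List (List α)) (h : ∀ a ∈ l, ∀ b ∈ l, (r a b ↔ s a b)) :
    List.insertionSort r l = List.insertionSort s l := by
  induction l with
  | nil => rfl
  | cons a l ih =>
      simp only [List.insertionSort_cons]
      rw [ih (fun x hx y hy => h x (by simp [hx]) y (by simp [hy]))]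
      exact orderedInsert_congr r s a _ (fun b hb => by
        have hb' : b ∈ l := by
          have := (List.perm_insertionSort s l).mem_iff.mp hb
          exact this
        exact h a (by simp) b (by simp [hb']))

-- rotations = cyclicPermutations for nonempty lists
lemma rotations_eq_cyclicPermutations {w : List α} (hw : w ≠ []) :
    rotations w = w.cyclicPermutations := by
  apply List.ext_getElem
  · simp [rotations, List.length_cyclicPermutations_of_ne_nil w hw]
  · intro n h1 h2
    have hn : n < w.length := by simpa [rotations] using h1
    simp only [rotations, List.getElem_map, List.getElem_range,
      List.getElem_cyclicPermutations]
    rw [List.rotate_eq_drop_append_take hn.le]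

lemma rotations_perm_of_rotate (w : List α) (hw : w ≠ []) (j : ℕ) :
    rotations (w.rotate j) ~ rotations w := by
  have h1 : w.rotate j ≠ [] := by simpa [List.rotate_eq_nil_iff] using hw
  rw [rotations_eq_cyclicPermutations h1, rotations_eq_cyclicPermutations hw,
    List.cyclicPermutations_rotate]
  exact List.rotate_perm _ _

-- rotR iterates
lemma rotR_eq_rotate (w : List α) : rotR w = w.rotate (w.length - 1) := by
  rw [List.rotate_eq_drop_append_take (Nat.sub_le _ _)]; rfl

lemma rotR_iterate (w : List α) (i : ℕ) :
    rotR^[i] w = w.rotate (i * (w.length - 1)) := by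
  induction i with
  | zero => simp
  | succ i ih =>
      rw [Function.iterate_succ_apply', ih, rotR_eq_rotate, List.length_rotate,
        List.rotate_rotate]
      ring_nf


lemma primitive_ne_nil {w : List α} (hw : Primitive w) : w ≠ [] := by
  rintro rfl
  exact hw ⟨[], 2, le_refl 2, by simp⟩

lemma mem_rotations_length {w a : List α} (ha : a ∈ rotations w) : a.length = w.length := by
  simp only [rotations, List.mem_map, List.mem_range] at ha
  obtain ⟨i, hi, rfl⟩ := ha
  simp only [List.length_append, List.length_drop, List.length_take]
  omega

lemma BWT_rotate (w : List α) (hw : w ≠ []) (j : ℕ) : BWT (w.rotate j) = BWT w := by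
  unfold BWT
  congr 1
  apply List.Perm.eq_of_pairwise' (r := fun a b : List α => a ≤ b) ?_ ?_
    (((List.perm_insertionSort _ _).trans (rotations_perm_of_rotate w hw j)).trans
      (List.perm_insertionSort _ _).symm)
  · exact List.pairwise_insertionSort _ _
  · exact List.pairwise_insertionSort _ _

lemma BBWTof_lyndon {u : List α} (hu : u ≠ []) : BBWTof [u] = BWT u := by
  unfold BBWTof BWT
  congr 1
  have h1 : ([u] : List (List α)).flatMap rotations = rotations u := by simp
  rw [h1]
  exact insertionSort_congr _ _ _ (fun a ha b hb =>
    omegaLE_iff_le_of_len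
      ((mem_rotations_length ha).trans (mem_rotations_length hb).symm))

lemma rot_index_arith {n j : ℕ} (hn : 0 < n) (hj : j < n) :
    ((n - j) % n * (n - 1)) % n = j := by
  rcases Nat.eq_zero_or_pos j with rfl | hj0
  · simp
  · have hnj : n - j < n := by omega
    rw [Nat.mod_eq_of_lt hnj]
    obtain ⟨e, he⟩ : ∃ e, n = j + e + 1 := ⟨n - j - 1, by omega⟩
    subst he
    have h1 : j + e + 1 - j = e + 1 := by omega
    have h2 : j + e + 1 - 1 = j + e := by omega
    rw [h1, h2]
    have h3 : (e + 1) * (j + e) = (j + e + 1) * e + j := by ring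
    rw [h3, Nat.mul_add_mod]
    exact Nat.mod_eq_of_lt (by omega)


/-- For every primitive string `w`, the minimum of `r_B` over all cyclic
rotations of `w` is at most `r(w)`: there is a rotation `rot^i(w)` with
`0 ≤ i < |w|` whose BBWT has at most `r(w)` runs. -/
theorem min_bbwt_runs_over_rotations_le_bwt_runs (w : List α) (hw : Primitive w) :
    ∃ i < w.length, ∀ fs, IsLyndonFactorization (rotR^[i] w) fs →
      runCount (BBWTof fs) ≤ runCount (BWT w) := by
  have hne : w ≠ [] := primitive_ne_nil hw
  have hn : 0 < w.length := List.length_pos_of_ne_nil hne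
  obtain ⟨j, hj, hlyn⟩ := exists_lyndon_rotation w hw hne
  refine ⟨(w.length - j) % w.length, Nat.mod_lt _ hn, ?_⟩
  have hrot : rotR^[(w.length - j) % w.length] w = w.rotate j := by
    rw [rotR_iterate, ← List.rotate_mod, rot_index_arith hn hj]
  intro fs hfs
  rw [hrot] at hfs
  rw [lyndon_fact_eq hlyn hfs, BBWTof_lyndon hlyn.1,
    BWT_rotate w hne j]
end

section
/- The string w = aaabaabaaabaabb over {a, b} with a ≺ b is a Lyndon word with r_B(w) = 6, whereas its rotation rot(w) = baaabaabaaabaab satisfies r_B(rot(w)) = 3. Consequently, the Lyndon rotation of a primitive word does not always minimize r_B among all cyclic rotations. -/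
open List

variable {α : Type*} [LinearOrder α]

/-- The word `w = aaabaabaaabaabb` over `{a, b}` with `a ≺ b`, encoded over
`Bool` with `a = false` and `b = true`. -/
def wEx : List Bool :=
  [false,false,false,true,false,false,true,false,false,false,true,false,false,true,true]

/-! ### Auxiliary lemmas: uniqueness of the Lyndon factorization -/

private lemma le_append_right' : ∀ (l t : List α), l ≤ l ++ t
  | [], t => by
    cases t with
    | nil => exact le_rfl
    | cons b t => exact le_of_lt List.Lex.nil
  | a :: l, t => List.cons_le_cons a (le_append_right' l t)

private lemma lt_append_right' {x y : List α} (t : List α) (h : x < y) : x < y ++ t :=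
  List.Lex.append_right (· < ·) t h

private instance : IsTrans (List α) (fun a b : List α => b ≤ a) :=
  ⟨fun _ _ _ hab hbc => le_trans hbc hab⟩

/-- The last factor of a Lyndon factorization is `≤` every nonempty suffix of
the whole word. -/
private lemma getLast_le_suffix : ∀ (fs : List (List α)) (hne : fs ≠ [])
    (_ : ∀ f ∈ fs, IsLyndon f) (_ : fs.Chain' (fun a b => b ≤ a))
    (s : List α), s ≠ [] → s <:+ fs.flatten → fs.getLast hne ≤ s
  | [], hne, _, _, _, _, _ => absurd rfl hne
  | f :: rest, _, hLy, hch, s, hs, hsuf => by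
    have hf : IsLyndon f := hLy f (mem_cons_self)
    rcases eq_or_ne rest [] with rfl | hr
    · -- single factor
      simp only [flatten_cons, flatten_nil, append_nil] at hsuf
      have hlast : (f :: ([] : List (List α))).getLast (cons_ne_nil _ _) = f := rfl
      rw [hlast]
      obtain ⟨t, ht⟩ := hsuf
      rcases eq_or_ne t [] with rfl | htne
      · simp at ht; exact le_of_eq ht.symm
      · have hlen : 0 < t.length := List.length_pos_iff.mpr htne
        have hslen : s = f.drop t.length := by
          have := congrArg (List.drop t.length) ht
          simpa using this
        have hlt : t.length < f.length := by
          have := congrArg List.length ht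
          simp at this
          have : 0 < s.length := List.length_pos_iff.mpr hs
          omega
        rw [hslen]
        exact le_of_lt (hf.2 t.length hlen hlt)
    · -- at least two factors
      have hlast : (f :: rest).getLast (cons_ne_nil _ _) = rest.getLast hr :=
        getLast_cons hr
      rw [hlast]
      have hLy' : ∀ g ∈ rest, IsLyndon g := fun g hg => hLy g (mem_cons_of_mem f hg)
      have hch' : rest.Chain' (fun a b => b ≤ a) := (List.isChain_cons.mp hch).2
      have hle_f : rest.getLast hr ≤ f := by
        have hp : List.Pairwise (fun a b : List α => b ≤ a) (f :: rest) :=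
          List.isChain_iff_pairwise.mp hch
        exact (List.pairwise_cons.mp hp).1 _ (getLast_mem hr)
      simp only [flatten_cons] at hsuf
      obtain ⟨t, ht⟩ := hsuf
      by_cases hlen : f.length ≤ t.length
      · -- s is a suffix of rest.flatten
        have : s <:+ rest.flatten := by
          refine ⟨t.drop f.length, ?_⟩
          have := congrArg (List.drop f.length) ht
          rwa [List.drop_append_of_le_length hlen,
            List.drop_append_of_le_length le_rfl, List.drop_length, nil_append] at this
        exact getLast_le_suffix rest hr hLy' hch' s hs this
      · push_neg at hlen
        have hsplit : s = f.drop t.length ++ rest.flatten := by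
          have h := congrArg (List.drop t.length) ht
          rw [List.drop_append_of_le_length hlen.le] at h
          simpa using h
        rcases Nat.eq_zero_or_pos t.length with h0 | h0
        · -- s = f ++ rest.flatten
          rw [hsplit, h0, List.drop_zero]
          exact le_trans hle_f (le_append_right' f rest.flatten)
        · have : f < f.drop t.length ++ rest.flatten :=
            lt_append_right' _ (hf.2 t.length h0 hlen)
          rw [hsplit]
          exact le_trans hle_f (le_of_lt this)

/-- Lyndon factorizations are unique. -/
private lemma factorization_unique : ∀ (w : List α) (fs gs : List (List α)),
    IsLyndonFactorization w fs → IsLyndonFactorization w gs → fs = gs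
  | w, fs, gs, hf, hg => by
    obtain ⟨hff, hfL, hfc⟩ := hf
    obtain ⟨hgf, hgL, hgc⟩ := hg
    rcases eq_or_ne fs [] with rfl | hfne
    · have hw : w = [] := by simpa using hff.symm
      rcases gs with _ | ⟨g, gs⟩
      · rfl
      · exfalso
        have : g ++ gs.flatten = [] := by rw [← flatten_cons, hgf, hw]
        exact (hgL g (mem_cons_self)).1 (List.append_eq_nil_iff.mp this).1
    · have hgne : gs ≠ [] := by
        rintro rfl
        have hw : w = [] := by simpa using hgf.symm
        rcases fs with _ | ⟨f, fs⟩
        · exact hfne rfl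
        · have : f ++ fs.flatten = [] := by rw [← flatten_cons, hff, hw]
          exact (hfL f (mem_cons_self)).1 (List.append_eq_nil_iff.mp this).1
      set L := fs.getLast hfne with hLdef
      set M := gs.getLast hgne with hMdef
      have h1 : fs.dropLast.flatten ++ L = w := by
        rw [← hff]
        conv_rhs => rw [← List.dropLast_append_getLast hfne]
        rw [flatten_append, flatten_cons, flatten_nil, append_nil]
      have h2 : gs.dropLast.flatten ++ M = w := by
        rw [← hgf]
        conv_rhs => rw [← List.dropLast_append_getLast hgne]
        rw [flatten_append, flatten_cons, flatten_nil, append_nil]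
      have hLsuf : L <:+ w := ⟨_, h1⟩
      have hMsuf : M <:+ w := ⟨_, h2⟩
      have hLne : L ≠ [] := (hfL L (getLast_mem hfne)).1
      have hMne : M ≠ [] := (hgL M (getLast_mem hgne)).1
      have hLM : L ≤ M := by
        have := getLast_le_suffix fs hfne hfL hfc M hMne (hff ▸ hMsuf)
        exact this
      have hML : M ≤ L := by
        have := getLast_le_suffix gs hgne hgL hgc L hLne (hgf ▸ hLsuf)
        exact this
      have hLMeq : L = M := le_antisymm hLM hML
      -- strip last factor
      have heq : fs.dropLast.flatten ++ L = gs.dropLast.flatten ++ L := by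
        rw [h1, hLMeq, h2]
      have hflat : fs.dropLast.flatten = gs.dropLast.flatten :=
        List.append_cancel_right heq
      have hlenlt : fs.dropLast.flatten.length < w.length := by
        have hl1 := congrArg List.length h1
        rw [List.length_append] at hl1
        have hl2 : 0 < L.length := List.length_pos_iff.mpr hLne
        omega
      have hfact1 : IsLyndonFactorization fs.dropLast.flatten fs.dropLast :=
        ⟨rfl, fun f hf => hfL f ((dropLast_prefix fs).subset hf),
          hfc.prefix (dropLast_prefix fs)⟩
      have hfact2 : IsLyndonFactorization fs.dropLast.flatten gs.dropLast :=
        ⟨hflat.symm, fun f hf => hgL f ((dropLast_prefix gs).subset hf),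
          hgc.prefix (dropLast_prefix gs)⟩
      have hrec : fs.dropLast = gs.dropLast :=
        factorization_unique fs.dropLast.flatten fs.dropLast gs.dropLast hfact1 hfact2
      calc fs = fs.dropLast ++ [L] := (List.dropLast_append_getLast hfne).symm
        _ = gs.dropLast ++ [M] := by rw [hrec, hLMeq]
        _ = gs := List.dropLast_append_getLast hgne
  termination_by w _ _ => w.length
  decreasing_by exact hlenlt

private def uEx : List Bool := [false,false,false,true,false,false,true]

private lemma isLyndon_wEx : IsLyndon wEx := by
  refine ⟨by decide, ?_⟩
  intro i h1 h2
  have : i < 15 := by simpa [wEx] using h2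
  interval_cases i <;> decide

private lemma isLyndon_uEx : IsLyndon uEx := by
  refine ⟨by decide, ?_⟩
  intro i h1 h2
  have : i < 7 := by simpa [uEx] using h2
  interval_cases i <;> decide

private lemma isLyndon_b : IsLyndon [true] := by
  refine ⟨by decide, ?_⟩
  intro i h1 h2
  simp at h2
  omega

private lemma fact_wEx : IsLyndonFactorization wEx [wEx] :=
  ⟨by simp, fun f hf => by simp at hf; rw [hf]; exact isLyndon_wEx, List.isChain_singleton _⟩

private lemma fact_rot : IsLyndonFactorization (rotR wEx) [[true], uEx, uEx] := by
  have hba : uEx ≤ [true] := le_of_lt (List.Lex.rel (by decide))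
  refine ⟨by decide, ?_,
    List.isChain_cons_cons.mpr ⟨hba, List.isChain_cons_cons.mpr ⟨le_rfl, List.isChain_singleton _⟩⟩⟩
  intro f hf
  simp only [List.mem_cons, List.mem_singleton, List.not_mem_nil, or_false] at hf
  rcases hf with rfl | rfl | rfl
  · exact isLyndon_b
  · exact isLyndon_uEx
  · exact isLyndon_uEx

/-- The word `w = aaabaabaaabaabb` is a Lyndon word with `r_B(w) = 6`, whereas
its rotation `rot(w) = baaabaabaaabaab` satisfies `r_B(rot(w)) = 3`.
Consequently, the Lyndon rotation of a primitive word does not always minimize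
`r_B` among all cyclic rotations. -/
theorem lyndon_rotation_not_optimal :
    IsLyndon wEx ∧
    (∀ fs, IsLyndonFactorization wEx fs → runCount (BBWTof fs) = 6) ∧
    (∀ fs, IsLyndonFactorization (rotR wEx) fs → runCount (BBWTof fs) = 3) := by
  refine ⟨isLyndon_wEx, ?_, ?_⟩
  · intro fs hfs
    have := factorization_unique wEx fs [wEx] hfs fact_wEx
    subst this
    decide
  · intro fs hfs
    have := factorization_unique (rotR wEx) fs [[true], uEx, uEx] hfs fact_rot
    subst this
    decide
end

section
/- Let w be a Lyndon word of length at least 2 and let v be the longest proper nonempty suffix of w that is a Lyndon word, with w = uv. Then u is also a Lyndon word. -/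
open List

variable {α : Type*} [LinearOrder α]

private lemma lex_cancel_left {β : Type*} [LinearOrder β] :
    ∀ (s x y : List β), s ++ x < s ++ y → x < y := by
  intro s
  induction s with
  | nil => intro x y h; simpa using h
  | cons a s ih =>
    intro x y h
    have h' : List.Lex (· < ·) (a :: (s ++ x)) (a :: (s ++ y)) := h
    rw [List.lex_cons_iff] at h'
    exact ih x y h'

private lemma lt_dichotomy {β : Type*} [LinearOrder β] {x y : List β} (h : x < y) :
    x <+: y ∨ ∀ a b : List β, x ++ a < y ++ b := by
  have h' : List.Lex (· < ·) x y := h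
  clear h
  induction h' with
  | nil => exact Or.inl (List.nil_prefix)
  | @cons a l₁ l₂ h ih =>
    rcases ih with hp | hlt
    · left
      obtain ⟨t, ht⟩ := hp
      exact ⟨t, by rw [List.cons_append, ht]⟩
    · right
      intro s t
      exact List.Lex.cons (hlt s t)
  | @rel a l₁ b l₂ hab =>
    right
    intro s t
    exact List.Lex.rel hab

/-- If `w` is a Lyndon word of length at least 2, `v` is the longest proper
(nonempty) Lyndon suffix of `w`, and `w = uv`, then `u` is a Lyndon word. -/
theorem left_factor_lyndon (w u v : List α) (hw : IsLyndon w) (hlen : 2 ≤ w.length)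
    (heq : w = u ++ v) (hv : IsLyndon v) (hvprop : v ≠ w)
    (hvmax : ∀ v', v' <:+ w → v' ≠ w → IsLyndon v' → v'.length ≤ v.length) :
    IsLyndon u := by
  obtain ⟨hwne, hwlt⟩ := hw
  obtain ⟨hvne, hvlt⟩ := hv
  have hune : u ≠ [] := by
    intro h; apply hvprop; rw [heq, h, List.nil_append]
  have hvpos : 0 < v.length := List.length_pos_iff.mpr hvne
  have hupos : 0 < u.length := List.length_pos_iff.mpr hune
  have hlenw : w.length = u.length + v.length := by rw [heq, List.length_append]
  -- v is ≤ every proper nonempty suffix of w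
  have star : ∀ j, 0 < j → j < w.length → v ≤ w.drop j := by
    have hne : (Finset.Ioo 0 w.length).Nonempty := ⟨1, by simp; omega⟩
    obtain ⟨j₀, hj₀mem, hj₀min⟩ :=
      Finset.exists_min_image (Finset.Ioo 0 w.length) (fun j => w.drop j) hne
    rw [Finset.mem_Ioo] at hj₀mem
    obtain ⟨hj₀pos, hj₀lt⟩ := hj₀mem
    have hdne : w.drop j₀ ≠ [] := by
      rw [← List.length_pos_iff, List.length_drop]; omega
    have hdLyn : IsLyndon (w.drop j₀) := by
      refine ⟨hdne, fun k hk hk' => ?_⟩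
      rw [List.length_drop] at hk'
      rw [List.drop_drop]
      have hle := hj₀min (j₀ + k) (by rw [Finset.mem_Ioo]; omega)
      refine lt_of_le_of_ne hle ?_
      intro hcon
      have := congrArg List.length hcon
      rw [List.length_drop, List.length_drop] at this
      omega
    have hdlen : (w.drop j₀).length ≤ v.length := by
      refine hvmax _ (List.drop_suffix _ _) ?_ hdLyn
      intro hcon
      have := congrArg List.length hcon
      rw [List.length_drop] at this
      omega
    rw [List.length_drop] at hdlen
    have hvdrop : v = w.drop u.length := by
      rw [heq, List.drop_left]
    have hj₀ge : u.length ≤ j₀ := by omega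
    have hvled : v ≤ w.drop j₀ := by
      rcases eq_or_lt_of_le hj₀ge with hEq | hLt
      · rw [hvdrop, hEq]
      · have hrw : w.drop j₀ = v.drop (j₀ - u.length) := by
          rw [hvdrop, List.drop_drop]
          congr 1
          omega
        rw [hrw]
        exact le_of_lt (hvlt (j₀ - u.length) (by omega) (by omega))
    intro j hj hj'
    exact le_trans hvled (hj₀min j (by rw [Finset.mem_Ioo]; omega))
  -- now prove u is Lyndon
  refine ⟨hune, fun i hi hi' => ?_⟩
  set u' := u.drop i with hu'
  have hwdrop : w.drop i = u' ++ v := by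
    rw [heq, List.drop_append_of_le_length (le_of_lt hi')]
  have hkey : u ++ v < u' ++ v := by
    rw [← hwdrop, ← heq]
    exact hwlt i hi (by omega)
  rcases lt_trichotomy u u' with h | h | h
  · exact h
  · exfalso
    have := congrArg List.length h
    rw [hu', List.length_drop] at this
    omega
  · exfalso
    rcases lt_dichotomy h with hp | hlt
    · -- u' is a proper prefix of u
      obtain ⟨t, ht⟩ := hp
      have hu'len : u'.length = u.length - i := by
        rw [hu', List.length_drop]
      have htne : t ≠ [] := by
        intro hcon
        rw [hcon, List.append_nil] at ht
        have := congrArg List.length ht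
        omega
      have htv : t ++ v < v := by
        apply lex_cancel_left u'
        rw [← List.append_assoc, ht]
        exact hkey
      have htvdrop : t ++ v = w.drop u'.length := by
        rw [heq, List.drop_append_of_le_length, ← ht, List.drop_left]
        rw [← ht, List.length_append]; omega
      have hu'pos : 0 < u'.length := by omega
      have hvle := star u'.length hu'pos (by omega)
      rw [← htvdrop] at hvle
      exact absurd (lt_of_le_of_lt hvle htv) (lt_irrefl v)
    · exact absurd (hlt v v) (asymm hkey)
end

section
/- Let w be a Lyndon word and write w = uv with u and v nonempty (so vu is a cyclic rotation of w). Then the Lyndon factorization of vu is the concatenation of the Lyndon factorization of the suffix v followed by the Lyndon factorization of the prefix u; in particular, no factor of the Lyndon factorization of vu crosses the boundary between v and u. -/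
open List

variable {α : Type*} [LinearOrder α]

lemma aux_not_lex_append (l t : List α) : ¬ List.Lex (· < ·) (l ++ t) l := by
  induction l with
  | nil => intro h; cases h
  | cons a l ih =>
    intro h
    cases h with
    | cons h => exact ih h
    | rel h => exact lt_irrefl a h

lemma aux_le_append (l t : List α) : l ≤ l ++ t :=
  le_of_not_gt (aux_not_lex_append l t)

/-- For a Lyndon word `w = uv` with `u, v` nonempty, the Lyndon factorization
of the rotation `vu` is the Lyndon factorization of the suffix `v` followed by
the Lyndon factorization of the prefix `u`; in particular no factor crosses the
boundary between `v` and `u`. -/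
theorem lyndonFactorization_rotation_append (w u v : List α) (hw : IsLyndon w)
    (heq : w = u ++ v) (hu : u ≠ []) (hv : v ≠ []) :
    ∀ fsv fsu, IsLyndonFactorization v fsv → IsLyndonFactorization u fsu →
      IsLyndonFactorization (v ++ u) (fsv ++ fsu) := by
  rintro fsv fsu ⟨hfv, hlv, hcv⟩ ⟨hfu, hlu, hcu⟩
  refine ⟨by simp [hfv, hfu], ?_, ?_⟩
  · intro f hf
    rcases mem_append.1 hf with h | h
    · exact hlv f h
    · exact hlu f h
  · rw [Chain', isChain_append]
    refine ⟨hcv, hcu, ?_⟩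
    intro x hx y hy
    -- x is the last factor of fsv: a suffix of v; y the first factor of fsu: a prefix of u
    obtain ⟨hne, hxl⟩ := mem_getLast?_eq_getLast hx
    have hxmem : x ∈ fsv := hxl ▸ getLast_mem hne
    have hfsv : fsv = fsv.dropLast ++ [x] := by
      rw [hxl]; exact (dropLast_append_getLast hne).symm
    have hxsuf : x <:+ v := by
      refine ⟨fsv.dropLast.flatten, ?_⟩
      rw [← hfv]; conv_rhs => rw [hfsv]
      simp
    have hfsu : fsu = y :: fsu.tail := eq_cons_of_mem_head? hy
    have hypre : y <+: u := by
      refine ⟨fsu.tail.flatten, ?_⟩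
      rw [← hfu]; conv_rhs => rw [hfsu]
      simp
    -- y ≤ w
    obtain ⟨t, ht⟩ := hypre
    have hyw : y ≤ w := by
      rw [heq, ← ht, append_assoc]; exact aux_le_append _ _
    -- w < x
    obtain ⟨s, hs⟩ : x <:+ w := hxsuf.trans ⟨u, heq.symm⟩
    have hxne : x ≠ [] := (hlv x hxmem).1
    have hsne : s ≠ [] := by
      rintro rfl
      simp at hs
      subst hs
      obtain ⟨s', hs'⟩ := hxsuf
      have h1 : x.length = u.length + v.length := by rw [heq]; simp
      have h2 : s'.length + x.length = v.length := by rw [← hs']; simp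
      have := length_pos_iff.2 hu
      omega
    have hslen : 0 < s.length := length_pos_iff.2 hsne
    have hslt : s.length < w.length := by
      rw [← hs]
      simp only [length_append]
      have := length_pos_iff.2 hxne
      omega
    have hwx : w < w.drop s.length := hw.2 s.length hslen hslt
    rw [← hs, drop_left] at hwx
    rw [← hs] at hyw
    exact le_of_lt (lt_of_le_of_lt hyw hwx)
end

section
/- Let w be a string, let f be a primitive string that occurs as a factor (contiguous substring) of w, and let m ≥ 1. Then the number of distinct strings of length m that occur as factors of the infinite periodic word f^∞ but do not occur as factors of w is at most m. -/
open List

variable {α : Type*} [LinearOrder α]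

set_option linter.unusedSectionVars false in
lemma getElem?_flatten_replicate (f : List α) :
    ∀ (k j : ℕ), j < k * f.length →
      ((List.replicate k f).flatten)[j]? = f[j % f.length]? := by
  intro k
  induction k with
  | zero => intro j hj; simp at hj
  | succ k ih =>
    intro j hj
    rw [List.replicate_succ, List.flatten_cons]
    by_cases h : j < f.length
    · rw [List.getElem?_append_left h, Nat.mod_eq_of_lt h]
    · push_neg at h
      rw [List.getElem?_append_right h, ih (j - f.length) (by
        rw [Nat.succ_mul] at hj; omega), ← Nat.mod_eq_sub_mod h]


/-- Let `f` be a primitive factor of `w` and `m ≥ 1`. The number of distinct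
strings of length `m` that are factors of the infinite periodic word `f^∞`
(equivalently, factors of some power `f^k`) but are not factors of `w` is at
most `m`. -/
theorem periodic_factors_not_in_word (w f : List α) (hf : Primitive f)
    (hocc : f <:+: w) (m : ℕ) (hm : 1 ≤ m) :
    {u : List α | u.length = m ∧ (∃ k, u <:+: (List.replicate k f).flatten) ∧
        ¬ u <:+: w}.ncard ≤ m := by
  have hfne : f ≠ [] := by
    rintro rfl
    exact hf ⟨[], 2, le_refl _, by simp⟩
  have hfpos : 0 < f.length := List.length_pos_iff.mpr hfne
  set g : ℕ → List α := fun i => (((List.replicate (i + m) f).flatten).drop i).take m with hg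
  -- each g i has the right pointwise values
  have hgval : ∀ i j, j < m → i < f.length → (g i)[j]? = f[(i + j) % f.length]? := by
    intro i j hj hi
    have hlt : i + j < (i + m) * f.length :=
      lt_of_lt_of_le (by omega) (Nat.le_mul_of_pos_right _ hfpos)
    simp only [hg, List.getElem?_take, if_pos hj, List.getElem?_drop]
    exact getElem?_flatten_replicate f _ _ hlt
  have hglen : ∀ i, (g i).length = m := by
    intro i
    have : i + m ≤ (i + m) * f.length := Nat.le_mul_of_pos_right _ hfpos
    have h2 : (g i).length = min m ((i + m) * f.length - i) := by
      simp [hg, List.length_flatten, List.map_replicate, List.sum_replicate]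
    omega
  -- if i + m ≤ f.length then g i is a factor of f
  have hginf : ∀ i, i + m ≤ f.length → g i <:+: f := by
    intro i him
    obtain ⟨n, hn⟩ : ∃ n, i + m = n + 1 := ⟨i + m - 1, by omega⟩
    have hflat : (List.replicate (i + m) f).flatten
        = f ++ (List.replicate n f).flatten := by
      rw [hn, List.replicate_succ, List.flatten_cons]
    have : g i = (f.drop i).take m := by
      rw [hg]
      simp only [hflat]
      rw [List.drop_append_of_le_length (by omega),
        List.take_append_of_le_length (by simp [List.length_drop]; omega)]
    rw [this]
    exact ((f.drop i).take_prefix m).isInfix.trans (f.drop_suffix i).isInfix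
  -- every element of the set is g i for some bad position i
  have hmem : ∀ u ∈ {u : List α | u.length = m ∧
      (∃ k, u <:+: (List.replicate k f).flatten) ∧ ¬ u <:+: w},
      ∃ i, i < f.length ∧ f.length < i + m ∧ u = g i := by
    rintro u ⟨hlen, ⟨k, hk⟩, hnw⟩
    obtain ⟨s, t, hst⟩ := hk
    have hLlen : s.length + (u.length + t.length) = k * f.length := by
      have := congrArg List.length hst
      simpa [List.length_flatten, List.map_replicate, List.sum_replicate] using this
    set i := s.length % f.length with hidef
    have hi : i < f.length := Nat.mod_lt _ hfpos
    have hu : u = g i := by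
      apply List.ext_getElem?
      intro j
      by_cases hj : j < m
      · have h1 : u[j]? = ((s ++ u) ++ t)[s.length + j]? := by
          rw [List.getElem?_append_left (by simp; omega),
            List.getElem?_append_right (Nat.le_add_right _ _)]
          simp
        rw [h1, hst, getElem?_flatten_replicate f _ _ (by omega),
          hgval i j hj hi, ← Nat.mod_add_mod]
      · push_neg at hj
        rw [List.getElem?_eq_none (by omega),
          List.getElem?_eq_none (by rw [hglen]; omega)]
    refine ⟨i, hi, ?_, hu⟩
    by_contra h
    push_neg at h
    exact hnw (hu ▸ ((hginf i h).trans hocc))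
  -- the set injects into the bad positions
  have hsub : {u : List α | u.length = m ∧
      (∃ k, u <:+: (List.replicate k f).flatten) ∧ ¬ u <:+: w}
      ⊆ g '' ↑(Finset.Ico (f.length + 1 - m) f.length) := by
    intro u hu
    obtain ⟨i, hi1, hi2, hi3⟩ := hmem u hu
    exact ⟨i, by simp [Finset.mem_Ico]; omega, hi3.symm⟩
  calc {u : List α | u.length = m ∧
      (∃ k, u <:+: (List.replicate k f).flatten) ∧ ¬ u <:+: w}.ncard
      ≤ (g '' ↑(Finset.Ico (f.length + 1 - m) f.length)).ncard :=
        Set.ncard_le_ncard hsub ((Finset.Ico _ _).finite_toSet.image g)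
    _ ≤ (↑(Finset.Ico (f.length + 1 - m) f.length) : Set ℕ).ncard :=
        Set.ncard_image_le (Finset.Ico _ _).finite_toSet
    _ = (Finset.Ico (f.length + 1 - m) f.length).card := Set.ncard_coe_finset _
    _ ≤ m := by rw [Nat.card_Ico]; omega
end
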